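/- arXiv:2504.18123 — 2 statements merged into one kernel-verified Lean document; each statement's English description precedes it below -/
import Mathlib

section
/- Let D ⊂ ℝ^n be a bounded domain, E ⊂ D a set closed relative to D, and suppose that for every point z_0 ∈ closure(D) there exists a neighborhood V of z_0 such that (V ∩ D) \ E has only finitely many connected components. Then D \ E has only finitely many connected components. -/
open Set

theorem stmt_7 (n : ℕ) (D E : Set (EuclideanSpace ℝ (Fin n)))
    (hD : IsOpen D) (hDconn : IsConnected D) (hDbd : Bornology.IsBounded D)
    (hED : E ⊆ D) (hEclosed : closure E ∩ D ⊆ E)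
    (hfin : ∀ z₀ ∈ closure D, ∃ V ∈ nhds z₀,
      {C : Set (EuclideanSpace ℝ (Fin n)) |
        ∃ x ∈ (V ∩ D) \ E, C = connectedComponentIn ((V ∩ D) \ E) x}.Finite) :
    {C : Set (EuclideanSpace ℝ (Fin n)) |
      ∃ x ∈ D \ E, C = connectedComponentIn (D \ E) x}.Finite := by
  choose V hV hVfin using hfin
  have hcomp : IsCompact (closure D) := hDbd.isCompact_closure
  obtain ⟨t, ht⟩ := hcomp.elim_nhds_subcover' V hV
  set g : Set (EuclideanSpace ℝ (Fin n)) → Set (EuclideanSpace ℝ (Fin n)) :=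
    fun C' => ⋃ y ∈ C', connectedComponentIn (D \ E) y with hg
  have hsub : {C : Set (EuclideanSpace ℝ (Fin n)) |
      ∃ x ∈ D \ E, C = connectedComponentIn (D \ E) x} ⊆
      ⋃ z ∈ t, g '' {C : Set (EuclideanSpace ℝ (Fin n)) |
        ∃ x ∈ (V z.1 z.2 ∩ D) \ E, C = connectedComponentIn ((V z.1 z.2 ∩ D) \ E) x} := by
    rintro C ⟨x, hx, rfl⟩
    have hxD : x ∈ closure D := subset_closure hx.1
    obtain ⟨z, hz, hxV⟩ := mem_iUnion₂.1 (ht hxD)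
    refine mem_iUnion₂.2 ⟨z, hz, ?_⟩
    have hxmem : x ∈ (V z.1 z.2 ∩ D) \ E := ⟨⟨hxV, hx.1⟩, hx.2⟩
    set C₀ := connectedComponentIn ((V z.1 z.2 ∩ D) \ E) x with hC₀
    refine ⟨C₀, ⟨x, hxmem, rfl⟩, ?_⟩
    have hxC₀ : x ∈ C₀ := mem_connectedComponentIn hxmem
    have hsubDE : C₀ ⊆ D \ E :=
      (connectedComponentIn_subset _ _).trans fun y hy => ⟨hy.1.2, hy.2⟩
    have hC₀cc : C₀ ⊆ connectedComponentIn (D \ E) x :=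
      (isPreconnected_connectedComponentIn).subset_connectedComponentIn hxC₀ hsubDE
    have key : ∀ y ∈ C₀, connectedComponentIn (D \ E) y = connectedComponentIn (D \ E) x := by
      intro y hy
      exact (connectedComponentIn_eq (hC₀cc hy)).symm
    simp only [hg]
    apply Subset.antisymm
    · refine iUnion₂_subset fun y hy => ?_
      rw [key y hy]
    · intro w hw
      exact mem_iUnion₂.2 ⟨x, hxC₀, by rwa [key x hxC₀]⟩
  refine Set.Finite.subset ?_ hsub
  exact (t.finite_toSet.biUnion fun z hz => (hVfin z.1 z.2).image g)
end

section
/- Let D ⊂ ℝ^n be a domain, D' ⊂ ℝ^n a domain, f : D → D' continuous with f(D) = D', and let E_* ⊂ D' be closed relative to D' with C(f, ∂D) ⊂ E_* and f^{-1}(E_*) = E for some set E ⊂ D closed relative to D. Let D_i be a connected component of D \ E. Then C(f, ∂D_i) ⊂ ∂f(D_i); that is, for any sequence z_k ∈ D_i with z_k → z_0 ∈ ∂D_i and f(z_k) → w_0, the point w_0 does not belong to f(D_i). -/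
open Filter Topology Set

theorem stmt_10 (n : ℕ) (D D' E E_star : Set (EuclideanSpace ℝ (Fin n)))
    (hD : IsOpen D) (hDconn : IsConnected D)
    (hD' : IsOpen D') (hD'conn : IsConnected D')
    (f : EuclideanSpace ℝ (Fin n) → EuclideanSpace ℝ (Fin n))
    (hf : ContinuousOn f D) (hfD : f '' D = D')
    (hE_star : E_star ⊆ D') (hE_starClosed : closure E_star ∩ D' ⊆ E_star)
    (hE : E ⊆ D) (hEClosed : closure E ∩ D ⊆ E)
    (hCluster : ∀ (z₀ w₀ : EuclideanSpace ℝ (Fin n)), z₀ ∈ frontier D →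
      (∃ zk : ℕ → EuclideanSpace ℝ (Fin n), (∀ k, zk k ∈ D) ∧
        Tendsto zk atTop (𝓝 z₀) ∧ Tendsto (fun k => f (zk k)) atTop (𝓝 w₀)) →
      w₀ ∈ E_star)
    (hpre : ∀ x ∈ D, x ∈ E ↔ f x ∈ E_star)
    (x₀ : EuclideanSpace ℝ (Fin n)) (hx₀ : x₀ ∈ D \ E)
    (Di : Set (EuclideanSpace ℝ (Fin n))) (hDi : Di = connectedComponentIn (D \ E) x₀) :
    ∀ (zk : ℕ → EuclideanSpace ℝ (Fin n)) (z₀ w₀ : EuclideanSpace ℝ (Fin n)),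
      (∀ k, zk k ∈ Di) → z₀ ∈ frontier Di → Tendsto zk atTop (𝓝 z₀) →
      Tendsto (fun k => f (zk k)) atTop (𝓝 w₀) → w₀ ∉ f '' Di := by
  intro zk z₀ w₀ hzk hz₀ hz hw hw₀
  -- D \ E is open
  have hDE_eq : D \ E = D ∩ (closure E)ᶜ := by
    ext x
    constructor
    · rintro ⟨hxD, hxE⟩
      exact ⟨hxD, fun hc => hxE (hEClosed ⟨hc, hxD⟩)⟩
    · rintro ⟨hxD, hxc⟩
      exact ⟨hxD, fun hc => hxc (subset_closure hc)⟩
  have hDE_open : IsOpen (D \ E) := by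
    rw [hDE_eq]; exact hD.inter isClosed_closure.isOpen_compl
  have hDiOpen : IsOpen Di := by
    rw [hDi]; exact hDE_open.connectedComponentIn
  have hDisub : Di ⊆ D \ E := by rw [hDi]; exact connectedComponentIn_subset _ _
  -- z₀ ∉ Di
  have hz₀nDi : z₀ ∉ Di := by
    intro h
    exact hz₀.2 (by rwa [hDiOpen.interior_eq])
  have hz₀cl : z₀ ∈ closure Di := hz₀.1
  -- z₀ ∉ D \ E : else it would be in Di
  have hz₀nDE : z₀ ∉ D \ E := by
    intro hmem
    apply hz₀nDi
    -- the component of z₀ is open and meets Di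
    have hopen : IsOpen (connectedComponentIn (D \ E) z₀) := hDE_open.connectedComponentIn
    have hzmem : z₀ ∈ connectedComponentIn (D \ E) z₀ := mem_connectedComponentIn hmem
    obtain ⟨y, hy1, hy2⟩ := mem_closure_iff.mp hz₀cl _ hopen hzmem
    rw [hDi] at hy2 ⊢
    rw [connectedComponentIn_eq hy2]
    exact connectedComponentIn_eq (connectedComponentIn_eq hy1 ▸ hzmem) ▸ hzmem
  -- main : w₀ ∈ E_star
  have hw₀E : w₀ ∈ E_star := by
    by_cases hz₀D : z₀ ∈ D
    · -- then z₀ ∈ E, and f continuous at z₀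
      have hz₀E : z₀ ∈ E := by
        by_contra h
        exact hz₀nDE ⟨hz₀D, h⟩
      have hcont : ContinuousAt f z₀ := hf.continuousAt (hD.mem_nhds hz₀D)
      have : Tendsto (fun k => f (zk k)) atTop (𝓝 (f z₀)) := hcont.tendsto.comp hz
      have hweq : w₀ = f z₀ := tendsto_nhds_unique hw this
      rw [hweq]
      exact (hpre z₀ hz₀D).mp hz₀E
    · -- z₀ ∈ frontier D
      have hz₀clD : z₀ ∈ closure D := by
        refine closure_mono ?_ hz₀cl
        exact fun x hx => (hDisub hx).1
      have hfr : z₀ ∈ frontier D := ⟨hz₀clD, by rwa [hD.interior_eq]⟩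
      exact hCluster z₀ w₀ hfr ⟨zk, fun k => (hDisub (hzk k)).1, hz, hw⟩
  -- contradiction with w₀ ∈ f '' Di
  obtain ⟨x, hxDi, hfx⟩ := hw₀
  have hxDE := hDisub hxDi
  exact hxDE.2 ((hpre x hxDE.1).mpr (hfx ▸ hw₀E))
end
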